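/- Let G be a compact Hausdorff topological group with Haar probability measure μ, let N be an open normal subgroup of G, let π : G → G/N be the quotient map, and let Q₁, Q₂ be subgroups of the finite group H := G/N. Then the product measure μ × μ of the set {(x,y) ∈ G × G : π(y) ∈ Q₂ and π(x·y·x⁻¹) ∈ Q₁} equals |Q₁| · |Q₂| · Nat.card(Q₁\H/Q₂) / |H|², where Nat.card(Q₁\H/Q₂) is the number of double cosets Q₁hQ₂ in H. -/

import Mathlib

/-!
Under `π × π` the set is the preimage of `S = {(a, b) : b ∈ Q₂, a b a⁻¹ ∈ Q₁} ⊆ H × H`, and by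
left invariance every coset of `N` has measure `1 / |H|`, so the measure is `|S| / |H|²`.
Sending `(a, b)` to `g = (a b a⁻¹, b) ∈ Q₁ × Q₂` together with `a` identifies `S` with the
pairs `(g, x)` such that `x` is fixed by `g` for the action `(q₁, q₂) • x = q₁ x q₂⁻¹` of
`Q₁ × Q₂` on `H`.
The orbits of this action are the double cosets, so Burnside's lemma gives
`|S| = |Q₁| |Q₂| · #(Q₁\H/Q₂)`.
-/

open MeasureTheory MulAction

namespace DoubleCoset

variable {H : Type*} [Group H] (Q₁ Q₂ : Subgroup H)

instance prodMulAction : MulAction (Q₁ × Q₂) H where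
  smul g x := g.1 * x * (g.2 : H)⁻¹
  one_smul x := by simp [HSMul.hSMul]
  mul_smul g g' x := by simp [HSMul.hSMul, mul_assoc]

variable {Q₁ Q₂}

lemma prod_smul_def (g : Q₁ × Q₂) (x : H) : g • x = g.1 * x * (g.2 : H)⁻¹ := rfl

lemma prod_smul_eq_self_iff {g : Q₁ × Q₂} {x : H} : g • x = x ↔ x * g.2 * x⁻¹ = g.1 := by
  rw [prod_smul_def, mul_inv_eq_iff_eq_mul, mul_inv_eq_iff_eq_mul, eq_comm]

variable (Q₁ Q₂)

def orbitRelQuotientEquiv :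
    orbitRel.Quotient (Q₁ × Q₂) H ≃ Quotient (Q₁ : Set H) (Q₂ : Set H) :=
  Quotient.congrRight fun a b => by
    rw [orbitRel_apply, mem_orbit_iff, rel_iff]
    constructor
    · rintro ⟨⟨q₁, q₂⟩, rfl⟩
      exact ⟨(q₁ : H)⁻¹, Q₁.inv_mem q₁.2, q₂, q₂.2, by rw [prod_smul_def]; group⟩
    · rintro ⟨h, hh, k, hk, rfl⟩
      exact ⟨(⟨h⁻¹, Q₁.inv_mem hh⟩, ⟨k, hk⟩), by rw [prod_smul_def]; group⟩

def conjMemEquivSigmaFixedBy :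
    {p : H × H | p.2 ∈ Q₂ ∧ p.1 * p.2 * p.1⁻¹ ∈ Q₁} ≃ Σ g : Q₁ × Q₂, fixedBy H g where
  toFun p := ⟨(⟨_, p.2.2⟩, ⟨_, p.2.1⟩), p.1.1, prod_smul_eq_self_iff.2 rfl⟩
  invFun s := ⟨(s.2, s.1.2), s.1.2.2, (prod_smul_eq_self_iff.1 s.2.2).symm ▸ s.1.1.2⟩
  left_inv _ := rfl
  right_inv := by
    rintro ⟨⟨⟨a, ha⟩, b⟩, x, hx⟩
    obtain rfl : x * b * x⁻¹ = a := prod_smul_eq_self_iff.1 hx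
    rfl

theorem ncard_conj_mem :
    {p : H × H | p.2 ∈ Q₂ ∧ p.1 * p.2 * p.1⁻¹ ∈ Q₁}.ncard =
      Nat.card Q₁ * Nat.card Q₂ * Nat.card (Quotient (Q₁ : Set H) (Q₂ : Set H)) := by
  rw [← Nat.card_coe_set_eq, Nat.card_congr ((conjMemEquivSigmaFixedBy Q₁ Q₂).trans
      ((sigmaFixedByEquivOrbitsProdGroup (Q₁ × Q₂) H).trans
        ((orbitRelQuotientEquiv Q₁ Q₂).prodCongr (Equiv.refl _)))),
    Nat.card_prod, Nat.card_prod]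
  ring

end DoubleCoset

open scoped ENNReal Pointwise

lemma QuotientGroup.preimage_mk_singleton_mk {G : Type*} [Group G] (N : Subgroup G) (x : G) :
    mk ⁻¹' {(x : G ⧸ N)} = x • (N : Set G) := by
  ext y
  rw [Set.mem_preimage, Set.mem_singleton_iff, eq_comm, QuotientGroup.eq, mem_leftCoset_iff]
  rfl

section Measure

variable {α β : Type*} [MeasurableSpace α] {μ : Measure α}

lemma measure_preimage_eq_ncard_mul {f : α → β} {s : Set β} (hs : s.Finite)
    (hf : ∀ b ∈ s, MeasurableSet (f ⁻¹' {b})) {c : ℝ≥0∞} (hc : ∀ b ∈ s, μ (f ⁻¹' {b}) = c) :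
    μ (f ⁻¹' s) = s.ncard * c := by
  lift s to Finset β using hs
  simp only [Finset.mem_coe] at hf hc
  rw [← sum_measure_preimage_singleton s hf, Finset.sum_congr rfl hc, Finset.sum_const,
    nsmul_eq_mul, Set.ncard_coe_finset]

variable {G : Type*} [Group G] [MeasurableSpace G] [MeasurableMul G] {N : Subgroup G}

lemma measurableSet_preimage_mk_singleton (hN : MeasurableSet (N : Set G)) (q : G ⧸ N) :
    MeasurableSet (QuotientGroup.mk ⁻¹' {q}) := by
  obtain ⟨x, rfl⟩ := QuotientGroup.mk_surjective q
  rw [QuotientGroup.preimage_mk_singleton_mk]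
  exact hN.const_smul x

lemma measure_preimage_mk_singleton (μ : Measure G) [μ.IsMulLeftInvariant]
    [IsProbabilityMeasure μ] [N.FiniteIndex] (hN : MeasurableSet (N : Set G)) (q : G ⧸ N) :
    μ (QuotientGroup.mk ⁻¹' {q}) = (N.index : ℝ≥0∞)⁻¹ := by
  obtain ⟨x, rfl⟩ := QuotientGroup.mk_surjective q
  have h := N.index_mul_measure hN μ
  rw [measure_univ] at h
  rw [QuotientGroup.preimage_mk_singleton_mk, measure_smul]
  exact ENNReal.eq_inv_of_mul_eq_one_left (by rwa [mul_comm])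

end Measure

theorem haar_measure_double_cosets_general (G : Type*) [Group G] [TopologicalSpace G]
    [IsTopologicalGroup G] [CompactSpace G] [MeasurableSpace G] [BorelSpace G]
    (μ : Measure G) [μ.IsHaarMeasure] [IsProbabilityMeasure μ]
    (N : Subgroup G) [N.Normal] (hN : IsOpen (N : Set G))
    (Q₁ Q₂ : Subgroup (G ⧸ N)) :
    (μ.prod μ) {q : G × G | QuotientGroup.mk' N q.2 ∈ Q₂ ∧
        QuotientGroup.mk' N (q.1 * q.2 * q.1⁻¹) ∈ Q₁} =
      (Nat.card Q₁ : ENNReal) * (Nat.card Q₂ : ENNReal) *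
          (Nat.card (DoubleCoset.Quotient (Q₁ : Set (G ⧸ N)) (Q₂ : Set (G ⧸ N))) : ENNReal) /
        (Nat.card (G ⧸ N) : ENNReal) ^ 2 := by
  have : Finite (G ⧸ N) := N.quotient_finite_of_isOpen hN
  have : N.FiniteIndex := Subgroup.finiteIndex_of_finite_quotient
  have hNm : MeasurableSet (N : Set G) := hN.measurableSet
  let π : G → G ⧸ N := QuotientGroup.mk
  have hset : {q : G × G | QuotientGroup.mk' N q.2 ∈ Q₂ ∧
      QuotientGroup.mk' N (q.1 * q.2 * q.1⁻¹) ∈ Q₁} =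
      Prod.map π π ⁻¹' {p | p.2 ∈ Q₂ ∧ p.1 * p.2 * p.1⁻¹ ∈ Q₁} := by
    ext; simp [π]
  have hfiber (p : (G ⧸ N) × (G ⧸ N)) :
      Prod.map π π ⁻¹' {p} = (π ⁻¹' {p.1}) ×ˢ (π ⁻¹' {p.2}) := by
    rw [← Set.singleton_prod_singleton, Set.preimage_prod_map_prod]
  have hfiber_meas (p : (G ⧸ N) × (G ⧸ N)) : MeasurableSet (Prod.map π π ⁻¹' {p}) :=
    hfiber p ▸ (measurableSet_preimage_mk_singleton hNm _).prod
      (measurableSet_preimage_mk_singleton hNm _)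
  have hfiber_measure (p : (G ⧸ N) × (G ⧸ N)) :
      (μ.prod μ) (Prod.map π π ⁻¹' {p}) = (N.index : ℝ≥0∞)⁻¹ * (N.index : ℝ≥0∞)⁻¹ := by
    rw [hfiber, Measure.prod_prod, measure_preimage_mk_singleton μ hNm,
      measure_preimage_mk_singleton μ hNm]
  rw [hset, measure_preimage_eq_ncard_mul (Set.toFinite _) (fun p _ ↦ hfiber_meas p)
      (fun p _ ↦ hfiber_measure p), DoubleCoset.ncard_conj_mem, ← Subgroup.index_eq_card,
    div_eq_mul_inv, ENNReal.inv_pow, sq]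
  push_cast
  ring

/-- For a compact group `G` with Haar probability measure `μ`, an open normal subgroup `N`,
and subgroups `Q₁, Q₂` of the finite quotient `H = G/N`:
`(μ×μ){(x,y) : π y ∈ Q₂, π(xyx⁻¹) ∈ Q₁} = |Q₁|·|Q₂|·#(Q₁\H/Q₂) / |H|²`. -/
theorem haar_measure_double_cosets (G : Type*) [Group G] [TopologicalSpace G]
    [IsTopologicalGroup G] [CompactSpace G] [T2Space G] [MeasurableSpace G] [BorelSpace G]
    (μ : Measure G) [μ.IsHaarMeasure] [IsProbabilityMeasure μ]
    (N : Subgroup G) [N.Normal] (hN : IsOpen (N : Set G))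
    (Q₁ Q₂ : Subgroup (G ⧸ N)) :
    (μ.prod μ) {q : G × G | QuotientGroup.mk' N q.2 ∈ Q₂ ∧
        QuotientGroup.mk' N (q.1 * q.2 * q.1⁻¹) ∈ Q₁} =
      (Nat.card Q₁ : ENNReal) * (Nat.card Q₂ : ENNReal) *
          (Nat.card (DoubleCoset.Quotient (Q₁ : Set (G ⧸ N)) (Q₂ : Set (G ⧸ N))) : ENNReal) /
        (Nat.card (G ⧸ N) : ENNReal) ^ 2 :=
  haar_measure_double_cosets_general G μ N hN Q₁ Q₂
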